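/- Fix integers r ≥ 1, d ≥ 1, S ≥ 1, a point λ ∈ ℂ and coefficients a : Fin (d*r) → Fin r → Fin S → ℂ; set φ i γ := Σ_{s ∈ Fin S} (a i γ s)·X^s ∈ Polynomial ℂ. For t : Fin r → ℂ let M(t) be the (d·r)×(d·r) complex matrix with rows indexed by (j,γ) ∈ Fin d × Fin r and columns indexed by i ∈ Fin (d*r), with entries M(t)_{(j,γ),i} := Σ_{s ∈ Fin S} a i γ s * iteratedDeriv s (fun z => z^j * Complex.exp ((t γ)*z)) λ. Then det M(t) = Complex.exp (d*λ*(Σ_{γ ∈ Fin r} t γ)) * det of the matrix whose ((j,γ),i) entry is Polynomial.eval (t γ) ((T_λ)^[j] (φ i γ)). In particular, the function t ↦ Complex.exp (−d*λ*Σ_γ t γ) * det M(t) is the evaluation of a multivariate polynomial in the r variables t γ. -/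

import Mathlib

/-!
Differentiating `z ↦ P(z) e^{tz}` acts on `P` as `T_t`, so `∂_z^s (z^j e^{tz})` at `z = λ` is
`e^{tλ} (T_t^s X^j)(λ)`.  The binomial expansion `Σ_k k! C(s,k) C(j,k) t^{s-k} λ^{j-k}` of
`(T_t^s X^j)(λ)` is symmetric under `(s, t) ↔ (j, λ)`, so this value is `(T_λ^j X^s)(t)`.
Hence row `(j, γ)` of `M(t)` is `e^{t_γ λ}` times the same row of the polynomial matrix; these
factors multiply to `e^{dλ Σ_γ t_γ}`, and what remains is a determinant of polynomials in the
`t_γ`.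
-/

open Polynomial

/-- The ℂ-linear operator `T_λ` on `ℂ[X]`, `T_λ(φ) = φ' + λ•φ`. -/
noncomputable def Tlam (l : ℂ) : Polynomial ℂ →ₗ[ℂ] Polynomial ℂ :=
  (Polynomial.derivative : Polynomial ℂ →ₗ[ℂ] Polynomial ℂ) + l • LinearMap.id

lemma Tlam_apply (u : ℂ) (P : ℂ[X]) : Tlam u P = derivative P + u • P := rfl

lemma Tlam_pow_apply (u : ℂ) (s : ℕ) (P : ℂ[X]) :
    (Tlam u ^ s) P = ∑ k ∈ Finset.range (s + 1),
      ((s.choose k : ℂ) * u ^ (s - k)) • derivative^[k] P := by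
  have hcomm : Commute (derivative : ℂ[X] →ₗ[ℂ] ℂ[X]) (u • LinearMap.id) :=
    (Commute.one_right _).smul_right u
  rw [Tlam, hcomm.add_pow, LinearMap.sum_apply]
  refine Finset.sum_congr rfl fun k _ => ?_
  simp only [_root_.smul_pow, Module.End.mul_apply, LinearMap.smul_apply,
    Module.End.id_pow, LinearMap.id_apply, Module.End.natCast_apply, Module.End.pow_apply]
  rw [mul_smul, ← Nat.cast_smul_eq_nsmul ℂ, iterate_derivative_smul, iterate_derivative_smul,
    smul_comm]

lemma eval_Tlam_pow_X_pow (u v : ℂ) (s j : ℕ) {n : ℕ} (hn : s < n) :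
    ((Tlam u ^ s) (X ^ j)).eval v = ∑ k ∈ Finset.range n,
      (k.factorial * s.choose k * j.choose k : ℂ) * u ^ (s - k) * v ^ (j - k) := by
  rw [Tlam_pow_apply, eval_finsetSum]
  refine (Finset.sum_subset (Finset.range_subset_range.mpr hn) fun k _ hk => ?_).trans
    (Finset.sum_congr rfl fun k _ => ?_)
  · simp [Nat.choose_eq_zero_of_lt (by simpa using hk : s < k)]
  · rw [iterate_derivative_X_pow_eq_smul, Nat.descFactorial_eq_factorial_mul_choose]
    simp only [Nat.cast_mul, eval_smul, eval_pow, eval_X, smul_eq_mul]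
    ring

lemma eval_Tlam_pow_X_pow_comm (u v : ℂ) (s j : ℕ) :
    ((Tlam u ^ s) (X ^ j)).eval v = ((Tlam v ^ j) (X ^ s)).eval u := by
  rw [eval_Tlam_pow_X_pow u v s j (n := s + j + 1) (by omega),
    eval_Tlam_pow_X_pow v u j s (n := s + j + 1) (by omega)]
  exact Finset.sum_congr rfl fun k _ => by ring

lemma deriv_eval_mul_exp (t : ℂ) (P : ℂ[X]) :
    deriv (fun z => P.eval z * Complex.exp (t * z)) =
      fun z => (Tlam t P).eval z * Complex.exp (t * z) := by
  funext z
  have hexp : HasDerivAt (fun z => Complex.exp (t * z)) (Complex.exp (t * z) * t) z := by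
    simpa using ((hasDerivAt_id z).const_mul t).cexp
  rw [((P.hasDerivAt z).mul hexp).deriv (f := fun z => P.eval z * Complex.exp (t * z)),
    Tlam_apply, eval_add, eval_smul, smul_eq_mul]
  ring

lemma iteratedDeriv_eval_mul_exp (t : ℂ) (s : ℕ) (P : ℂ[X]) :
    iteratedDeriv s (fun z => P.eval z * Complex.exp (t * z)) =
      fun z => ((Tlam t ^ s) P).eval z * Complex.exp (t * z) := by
  induction s generalizing P with
  | zero => simp
  | succ s ih =>
    rw [iteratedDeriv_succ', deriv_eval_mul_exp, ih, pow_succ, Module.End.mul_apply]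

lemma iteratedDeriv_pow_mul_exp (t l : ℂ) (s j : ℕ) :
    iteratedDeriv s (fun z => z ^ j * Complex.exp (t * z)) l =
      ((Tlam l ^ j) (X ^ s)).eval t * Complex.exp (t * l) := by
  simpa [eval_Tlam_pow_X_pow_comm] using
    congrFun (iteratedDeriv_eval_mul_exp t s (X ^ j)) l

lemma det_of_exp_mul {ι κ : Type*} [Fintype ι] [Fintype κ] [DecidableEq ι] [DecidableEq κ]
    (t : κ → ℂ) (l : ℂ) (N : Matrix (ι × κ) (ι × κ) ℂ) :
    (Matrix.of fun p q => Complex.exp (t p.2 * l) * N p q).det =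
      Complex.exp (Fintype.card ι * l * ∑ γ, t γ) * N.det := by
  rw [Matrix.det_mul_column, ← Complex.exp_sum, Fintype.sum_prod_type]
  congr 2
  simp [← Finset.sum_mul]
  ring

lemma exists_mvPolynomial_eval_det {R σ n : Type*} [CommRing R] [Fintype n] [DecidableEq n]
    (v : n → σ) (P : Matrix n n R[X]) :
    ∃ F : MvPolynomial σ R, ∀ t : σ → R,
      (Matrix.of fun p q => (P p q).eval (t (v p))).det = MvPolynomial.eval t F := by
  refine ⟨(Matrix.of fun p q => aeval (MvPolynomial.X (v p)) (P p q)).det, fun t => ?_⟩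
  rw [RingHom.map_det]
  congr 1
  ext p q
  change _ = MvPolynomial.aeval t (aeval (MvPolynomial.X (v p)) (P p q))
  rw [← aeval_algHom_apply, MvPolynomial.aeval_X, coe_aeval_eq_eval]
  rfl

theorem det_onePoint_tau_polynomial_general (r d S : ℕ) (l : ℂ)
    (a : Fin (d * r) → Fin r → Fin S → ℂ)
    (φ : Fin (d * r) → Fin r → Polynomial ℂ)
    (hφ : ∀ i γ, φ i γ = ∑ s : Fin S, a i γ s • (X : Polynomial ℂ) ^ (s : ℕ))
    (M : (Fin r → ℂ) → Matrix (Fin d × Fin r) (Fin d × Fin r) ℂ)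
    (hM : ∀ (t : Fin r → ℂ) (p q : Fin d × Fin r),
      M t p q = ∑ s : Fin S, a (finProdFinEquiv q) p.2 s *
        iteratedDeriv (s : ℕ)
          (fun z : ℂ => z ^ (p.1 : ℕ) * Complex.exp (t p.2 * z)) l) :
    (∀ t : Fin r → ℂ,
      (M t).det = Complex.exp ((d : ℂ) * l * ∑ γ : Fin r, t γ) *
        (Matrix.of fun p q : Fin d × Fin r =>
          Polynomial.eval (t p.2)
            ((Tlam l ^ (p.1 : ℕ)) (φ (finProdFinEquiv q) p.2))).det) ∧
    ∃ F : MvPolynomial (Fin r) ℂ, ∀ t : Fin r → ℂ,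
      Complex.exp (-(d : ℂ) * l * ∑ γ : Fin r, t γ) * (M t).det =
        MvPolynomial.eval t F := by
  have hM' : ∀ t, M t = Matrix.of fun p q => Complex.exp (t p.2 * l) *
      ((Tlam l ^ (p.1 : ℕ)) (φ (finProdFinEquiv q) p.2)).eval (t p.2) := by
    intro t
    ext p q
    simp only [hM, iteratedDeriv_pow_mul_exp, hφ, map_sum, map_smul, eval_finsetSum, eval_smul,
      smul_eq_mul, Finset.mul_sum, Matrix.of_apply]
    exact Finset.sum_congr rfl fun s _ => by ring
  have hdet : ∀ t : Fin r → ℂ, (M t).det = Complex.exp ((d : ℂ) * l * ∑ γ, t γ) *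
      (Matrix.of fun p q : Fin d × Fin r =>
        ((Tlam l ^ (p.1 : ℕ)) (φ (finProdFinEquiv q) p.2)).eval (t p.2)).det := by
    intro t
    simpa [hM'] using det_of_exp_mul (ι := Fin d) t l (Matrix.of fun p q =>
      ((Tlam l ^ (p.1 : ℕ)) (φ (finProdFinEquiv q) p.2)).eval (t p.2))
  obtain ⟨F, hF⟩ := exists_mvPolynomial_eval_det Prod.snd
    (Matrix.of fun p q : Fin d × Fin r => (Tlam l ^ (p.1 : ℕ)) (φ (finProdFinEquiv q) p.2))
  refine ⟨hdet, F, fun t => ?_⟩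
  rw [hdet, ← mul_assoc, ← Complex.exp_add, neg_mul, neg_mul, neg_add_cancel, Complex.exp_zero,
    one_mul, ← hF]
  rfl

/-- the determinant of the matrix
`M(t)_{(j,γ),i} = Σ_s a i γ s · d^s/dz^s (z^j e^{t_γ z})|_{z=λ}` equals
`exp(d·λ·Σ_γ t_γ)` times the determinant of the matrix with entries
`((T_λ)^j (φ i γ)).eval (t_γ)`; in particular
`t ↦ exp(−d·λ·Σ_γ t_γ) · det M(t)` is the evaluation of a multivariate
polynomial in the `r` variables `t_γ`. -/
theorem det_onePoint_tau_polynomial (r d S : ℕ) (hr : 1 ≤ r) (hd : 1 ≤ d)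
    (hS : 1 ≤ S) (l : ℂ) (a : Fin (d * r) → Fin r → Fin S → ℂ)
    (φ : Fin (d * r) → Fin r → Polynomial ℂ)
    (hφ : ∀ i γ, φ i γ = ∑ s : Fin S, a i γ s • (X : Polynomial ℂ) ^ (s : ℕ))
    (M : (Fin r → ℂ) → Matrix (Fin d × Fin r) (Fin d × Fin r) ℂ)
    (hM : ∀ (t : Fin r → ℂ) (p q : Fin d × Fin r),
      M t p q = ∑ s : Fin S, a (finProdFinEquiv q) p.2 s *
        iteratedDeriv (s : ℕ)
          (fun z : ℂ => z ^ (p.1 : ℕ) * Complex.exp (t p.2 * z)) l) :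
    (∀ t : Fin r → ℂ,
      (M t).det = Complex.exp ((d : ℂ) * l * ∑ γ : Fin r, t γ) *
        (Matrix.of fun p q : Fin d × Fin r =>
          Polynomial.eval (t p.2)
            ((Tlam l ^ (p.1 : ℕ)) (φ (finProdFinEquiv q) p.2))).det) ∧
    ∃ F : MvPolynomial (Fin r) ℂ, ∀ t : Fin r → ℂ,
      Complex.exp (-(d : ℂ) * l * ∑ γ : Fin r, t γ) * (M t).det =
        MvPolynomial.eval t F :=
  det_onePoint_tau_polynomial_general r d S l a φ hφ M hM
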